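/- arXiv:2007.09561 — 3 statements merged into one kernel-verified Lean document; each statement's English description precedes it below -/
import Mathlib

section
/- Suppose σ, l are reals with 0 < σ ≤ 1 ≤ l and positive integers h ≤ m. If A is a nonnegative (n−1)×(n−1) matrix with all row sums at most l^{m−h}, such that for some indices s, s₁ one has A_{s,s₁} ≥ σ^{m−h}, and B is a nonnegative matrix with Λ_j[B] ≤ l^h for all j and Λ_{s₁}[B] ≤ l^h − σ^h, then Λ_s[AB] ≤ l^m − σ^m. -/
/-!
Expanding `Λ_s[AB] = ∑ⱼ A_{s,j} Λ_j[B]` and bounding every `Λ_j[B]` by `l^h`, except `Λ_{s₁}[B]`,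
which is bounded by `l^h − σ^h`, gives `Λ_s[AB] ≤ Λ_s[A] l^h − A_{s,s₁} σ^h`. The right-hand side
is monotone in `Λ_s[A]` and antitone in `A_{s,s₁}`, so the bounds `Λ_s[A] ≤ l^(m−h)` and
`A_{s,s₁} ≥ σ^(m−h)` turn it into `l^m − σ^m`.
-/

open Finset

theorem Matrix.sum_mul_apply {ι α : Type*} [Fintype ι] [NonUnitalNonAssocSemiring α]
    (A B : Matrix ι ι α) (i : ι) :
    ∑ j, (A * B) i j = ∑ j, A i j * ∑ j', B j j' := by
  simp only [Matrix.mul_apply, Finset.mul_sum]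
  exact Finset.sum_comm

theorem Finset.sum_mul_le_sum_mul_sub_of_le_sub {ι R : Type*} [Fintype ι] [DecidableEq ι]
    [CommRing R] [PartialOrder R] [IsOrderedRing R] {w x : ι → R} {c d : R} (i₀ : ι)
    (hw : ∀ i, 0 ≤ w i) (hx : ∀ i, x i ≤ c) (hx₀ : x i₀ ≤ c - d) :
    ∑ i, w i * x i ≤ (∑ i, w i) * c - w i₀ * d := by
  rw [← add_sum_erase _ _ (mem_univ i₀), ← add_sum_erase _ _ (mem_univ i₀), add_mul, sum_mul]
  have h₀ : w i₀ * x i₀ ≤ w i₀ * (c - d) := mul_le_mul_of_nonneg_left hx₀ (hw i₀)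
  have hrest : ∑ i ∈ univ.erase i₀, w i * x i ≤ ∑ i ∈ univ.erase i₀, w i * c :=
    sum_le_sum fun i _ => mul_le_mul_of_nonneg_left (hx i) (hw i)
  linear_combination h₀ + hrest

theorem rowSum_prod_bound_general {k : ℕ}
    (σ l : ℝ) (hσ0 : 0 < σ) (hl : 1 ≤ l)
    (h m : ℕ) (hhm : h ≤ m)
    (A B : Matrix (Fin k) (Fin k) ℝ) (s s₁ : Fin k)
    (hAnn : ∀ i j, 0 ≤ A i j)
    (hArows : ∀ i, ∑ j, A i j ≤ l ^ (m - h))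
    (hAss1 : σ ^ (m - h) ≤ A s s₁)
    (hBrows : ∀ j, ∑ j', B j j' ≤ l ^ h)
    (hBs1 : ∑ j', B s₁ j' ≤ l ^ h - σ ^ h) :
    ∑ j, (A * B) s j ≤ l ^ m - σ ^ m := by
  have hlh : 0 ≤ l ^ h := pow_nonneg (zero_le_one.trans hl) h
  have hσh : 0 ≤ σ ^ h := pow_nonneg hσ0.le h
  calc ∑ j, (A * B) s j
      ≤ (∑ j, A s j) * l ^ h - A s s₁ * σ ^ h := by
        rw [Matrix.sum_mul_apply]
        exact sum_mul_le_sum_mul_sub_of_le_sub s₁ (hAnn s) hBrows hBs1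
    _ ≤ l ^ (m - h) * l ^ h - σ ^ (m - h) * σ ^ h := by gcongr; exact hArows s
    _ = l ^ m - σ ^ m := by rw [← pow_add, ← pow_add, Nat.sub_add_cancel hhm]

/-- Row-sum bound for a product: if all row sums of the
nonnegative matrix `A` are at most `l^(m−h)`, `A_{s,s₁} ≥ σ^(m−h)`, all row
sums of the nonnegative matrix `B` are at most `l^h`, and the `s₁`-th row sum
of `B` is at most `l^h − σ^h`, then `Λ_s[A*B] ≤ l^m − σ^m`
(for `0 < σ ≤ 1 ≤ l` and positive integers `h ≤ m`). -/
theorem rowSum_prod_bound {k : ℕ}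
    (σ l : ℝ) (hσ0 : 0 < σ) (hσ1 : σ ≤ 1) (hl : 1 ≤ l)
    (h m : ℕ) (hh : 0 < h) (hhm : h ≤ m)
    (A B : Matrix (Fin k) (Fin k) ℝ) (s s₁ : Fin k)
    (hAnn : ∀ i j, 0 ≤ A i j) (hBnn : ∀ i j, 0 ≤ B i j)
    (hArows : ∀ i, ∑ j, A i j ≤ l ^ (m - h))
    (hAss1 : σ ^ (m - h) ≤ A s s₁)
    (hBrows : ∀ j, ∑ j', B j j' ≤ l ^ h)
    (hBs1 : ∑ j', B s₁ j' ≤ l ^ h - σ ^ h) :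
    ∑ j, (A * B) s j ≤ l ^ m - σ ^ m :=
  rowSum_prod_bound_general σ l hσ0 hl h m hhm A B s s₁ hAnn hArows hAss1 hBrows hBs1
end

section
/- Let σ ∈ (0,1], l ≥ 1, and h ≥ 1, l₁ ∈ {0,...,h−1} be integers. Let A, B, C be nonnegative matrices where: every row sum of A is at most l^{l₁}; B has row s₁ with sum at most l − σ; every row sum of B is at most l; and C has all row sums at most l^{h−l₁−1} with diagonal entry C_{s₁s₁} ≥ σ^{h−l₁−1}. Then the s₁-th row sum of the product C·B·A is at most l^h − σ^h. -/
/-!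
Write `Λᵢ[S] = ∑ⱼ Sᵢⱼ`. For nonnegative `X`, `Λᵢ[X Y] = ∑ⱼ Xᵢⱼ Λⱼ[Y]`, so a bound on every row
sum of `Y` passes to `X Y`, and the smaller bound `l - σ` on row `s₁` of `B` saves
`C s₁ s₁ * σ ≥ σ ^ (h - l₁)`: `Λ_{s₁}[C B] ≤ l ^ (h - l₁) - σ ^ (h - l₁)`. Multiplying by
`l ^ l₁ ≥ σ ^ l₁` gives `l ^ h - σ ^ h`.
-/

open Finset

namespace Matrix

variable {ι κ μ R : Type*} [Fintype κ] [Fintype μ]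

theorem sum_mul_apply_eq [NonUnitalNonAssocSemiring R] (X : Matrix ι κ R) (Y : Matrix κ μ R)
    (i : ι) :
    ∑ j, (X * Y) i j = ∑ m, X i m * ∑ j, Y m j := by
  simp only [mul_apply, mul_sum]
  exact sum_comm

theorem sum_mul_apply_le [Semiring R] [PartialOrder R] [IsOrderedRing R]
    {X : Matrix ι κ R} {Y : Matrix κ μ R} {i : ι}
    (hX : ∀ m, 0 ≤ X i m) {b : R} (hY : ∀ m, ∑ j, Y m j ≤ b) :
    ∑ j, (X * Y) i j ≤ (∑ m, X i m) * b := by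
  rw [sum_mul_apply_eq, sum_mul]
  exact sum_le_sum fun m _ => mul_le_mul_of_nonneg_left (hY m) (hX m)

theorem sum_mul_apply_le_sub [Ring R] [PartialOrder R] [IsOrderedRing R] [DecidableEq κ]
    {X : Matrix ι κ R} {Y : Matrix κ μ R} {i : ι}
    (hX : ∀ m, 0 ≤ X i m) {b d : R} (s : κ) (hY : ∀ m, ∑ j, Y m j ≤ b)
    (hYs : ∑ j, Y s j ≤ b - d) :
    ∑ j, (X * Y) i j ≤ (∑ m, X i m) * b - X i s * d := by
  have hrow : ∀ m, ∑ j, Y m j ≤ b - if m = s then d else 0 := fun m => by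
    split_ifs with hm
    · exact hm ▸ hYs
    · simpa using hY m
  calc ∑ j, (X * Y) i j ≤ ∑ m, X i m * (b - if m = s then d else 0) := by
        rw [sum_mul_apply_eq]
        exact sum_le_sum fun m _ => mul_le_mul_of_nonneg_left (hrow m) (hX m)
    _ = (∑ m, X i m) * b - X i s * d := by
        simp [mul_sub, sum_sub_distrib, sum_mul]

end Matrix

theorem mul_sub_mul_mul_pow_le {σ l r c : ℝ} (hσ : 0 ≤ σ) (hσl : σ ≤ l) (p n : ℕ)
    (hr : r ≤ l ^ n) (hc : σ ^ n ≤ c) :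
    (r * l - c * σ) * l ^ p ≤ l ^ (p + n + 1) - σ ^ (p + n + 1) := by
  have hl : 0 ≤ l := hσ.trans hσl
  calc (r * l - c * σ) * l ^ p ≤ (l ^ n * l - σ ^ n * σ) * l ^ p := by
        gcongr
    _ = l ^ (p + n + 1) - σ ^ (n + 1) * l ^ p := by ring
    _ ≤ l ^ (p + n + 1) - σ ^ (n + 1) * σ ^ p := by gcongr
    _ = l ^ (p + n + 1) - σ ^ (p + n + 1) := by ring

theorem rowSum_triple_prod_bound_general {k : ℕ}
    (σ l : ℝ) (hσ0 : 0 < σ)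
    (h l₁ : ℕ) (hl₁ : l₁ < h)
    (A B C : Matrix (Fin k) (Fin k) ℝ) (s₁ : Fin k)
    (hBnn : ∀ i j, 0 ≤ B i j)
    (hCnn : ∀ i j, 0 ≤ C i j)
    (hArows : ∀ i, ∑ j, A i j ≤ l ^ l₁)
    (hBs1 : ∑ j, B s₁ j ≤ l - σ)
    (hBrows : ∀ i, ∑ j, B i j ≤ l)
    (hCrows : ∀ i, ∑ j, C i j ≤ l ^ (h - l₁ - 1))
    (hCs1s1 : σ ^ (h - l₁ - 1) ≤ C s₁ s₁) :
    ∑ j, (C * B * A) s₁ j ≤ l ^ h - σ ^ h := by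
  obtain ⟨n, rfl⟩ := Nat.exists_eq_add_of_lt hl₁
  rw [show l₁ + n + 1 - l₁ - 1 = n by omega] at hCrows hCs1s1
  have hσl : σ ≤ l := by linarith [sum_nonneg fun j (_ : j ∈ univ) => hBnn s₁ j]
  have hCB : ∀ m, 0 ≤ (C * B) s₁ m := fun m => by
    rw [Matrix.mul_apply]
    exact sum_nonneg fun i _ => mul_nonneg (hCnn s₁ i) (hBnn i m)
  calc ∑ j, (C * B * A) s₁ j ≤ (∑ m, (C * B) s₁ m) * l ^ l₁ :=
        Matrix.sum_mul_apply_le hCB hArows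
    _ ≤ ((∑ m, C s₁ m) * l - C s₁ s₁ * σ) * l ^ l₁ := by
        gcongr
        · exact pow_nonneg (hσ0.le.trans hσl) _
        · exact Matrix.sum_mul_apply_le_sub (hCnn s₁) s₁ hBrows hBs1
    _ ≤ l ^ (l₁ + n + 1) - σ ^ (l₁ + n + 1) :=
        mul_sub_mul_mul_pow_le hσ0.le hσl l₁ n (hCrows s₁) hCs1s1

/-- With `σ ∈ (0,1]`, `l ≥ 1`, integers `h ≥ 1` and
`l₁ ∈ {0,…,h−1}`, and nonnegative matrices `A`, `B`, `C` such that all row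
sums of `A` are ≤ `l^l₁`, the `s₁`-th row sum of `B` is ≤ `l − σ`, all row
sums of `B` are ≤ `l`, all row sums of `C` are ≤ `l^(h−l₁−1)` and
`C_{s₁s₁} ≥ σ^(h−l₁−1)`, the `s₁`-th row sum of `C*B*A` is at most
`l^h − σ^h`. -/
theorem rowSum_triple_prod_bound {k : ℕ}
    (σ l : ℝ) (hσ0 : 0 < σ) (hσ1 : σ ≤ 1) (hl : 1 ≤ l)
    (h l₁ : ℕ) (hh : 1 ≤ h) (hl₁ : l₁ < h)
    (A B C : Matrix (Fin k) (Fin k) ℝ) (s₁ : Fin k)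
    (hAnn : ∀ i j, 0 ≤ A i j) (hBnn : ∀ i j, 0 ≤ B i j)
    (hCnn : ∀ i j, 0 ≤ C i j)
    (hArows : ∀ i, ∑ j, A i j ≤ l ^ l₁)
    (hBs1 : ∑ j, B s₁ j ≤ l - σ)
    (hBrows : ∀ i, ∑ j, B i j ≤ l)
    (hCrows : ∀ i, ∑ j, C i j ≤ l ^ (h - l₁ - 1))
    (hCs1s1 : σ ^ (h - l₁ - 1) ≤ C s₁ s₁) :
    ∑ j, (C * B * A) s₁ j ≤ l ^ h - σ ^ h :=
  rowSum_triple_prod_bound_general σ l hσ0 h l₁ hl₁ A B C s₁ hBnn hCnn hArows hBs1 hBrows hCrows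
    hCs1s1
end

section
/- Let (m*(t)) be defined recursively by m*(t) = Φ(t)·m*(t−1) + w(t) with m*(−1) = 0, where each [Φ(t) w(t); 0 I_k] is a row-stochastic matrix (Φ(t) nonnegative (n−k)×(n−k), w(t) nonnegative (n−k)×k). Then every partial m*(t) has all row sums at most 1, and if Φ(t)···Φ(0) → 0 then the row sums of m*(t) converge to 1, i.e., the limit m* = lim m*(t) is row-stochastic. -/
open Filter Topology

/-- Left partial products: `lprod Φ t = Φ(t−1) ⋯ Φ(1) Φ(0)` (and `lprod Φ 0 = I`). -/
def lprod {a : ℕ} (Φ : ℕ → Matrix (Fin a) (Fin a) ℝ) : ℕ → Matrix (Fin a) (Fin a) ℝ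
  | 0 => 1
  | t + 1 => Φ t * lprod Φ t

/-- The accumulated input-to-state map `m*(t) = Φ(t)·m*(t−1) + w(t)`,
with `m*(−1) = 0` (so `m*(0) = w(0)`). -/
def mstar {a k : ℕ} (Φ : ℕ → Matrix (Fin a) (Fin a) ℝ)
    (w : ℕ → Matrix (Fin a) (Fin k) ℝ) : ℕ → Matrix (Fin a) (Fin k) ℝ
  | 0 => w 0
  | t + 1 => Φ (t + 1) * mstar Φ w t + w (t + 1)

/-
With `1` the all-ones vector, `M *ᵥ 1` is the vector of row sums of `M`.
Induction on `t` gives the conservation law `m*(t) *ᵥ 1 + Φ(t)⋯Φ(0) *ᵥ 1 = 1`: the mass a row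
does not send to the absorbing block is exactly what is still carried by the product of the
`Φ`'s. That product is nonnegative, which gives the bound, and its row sums tend to `0` when it
does, which gives the limit.
-/

open Matrix

lemma Matrix.mulVec_one_apply {m n α : Type*} [Fintype n] [NonAssocSemiring α]
    (A : Matrix m n α) (i : m) : (A *ᵥ 1) i = ∑ j, A i j :=
  dotProduct_one (A i)

lemma lprod_nonneg {a : ℕ} {Φ : ℕ → Matrix (Fin a) (Fin a) ℝ}
    (hΦ : ∀ t i j, 0 ≤ Φ t i j) (t : ℕ) (i j : Fin a) : 0 ≤ lprod Φ t i j := by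
  induction t generalizing i j with
  | zero => simp only [lprod, one_apply]; split_ifs <;> norm_num
  | succ t ih =>
    rw [lprod, mul_apply]
    exact Finset.sum_nonneg fun l _ => mul_nonneg (hΦ t i l) (ih l j)

lemma mstar_mulVec_one_add_lprod_mulVec_one {a k : ℕ} {Φ : ℕ → Matrix (Fin a) (Fin a) ℝ}
    {w : ℕ → Matrix (Fin a) (Fin k) ℝ} (hrow : ∀ t, Φ t *ᵥ 1 + w t *ᵥ 1 = 1) (t : ℕ) :
    mstar Φ w t *ᵥ 1 + lprod Φ (t + 1) *ᵥ 1 = 1 := by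
  induction t with
  | zero => simpa [mstar, lprod, add_comm] using hrow 0
  | succ t ih =>
    calc mstar Φ w (t + 1) *ᵥ 1 + lprod Φ (t + 2) *ᵥ 1
        = Φ (t + 1) *ᵥ (mstar Φ w t *ᵥ 1 + lprod Φ (t + 1) *ᵥ 1) + w (t + 1) *ᵥ 1 := by
          rw [mulVec_add, mulVec_mulVec, mulVec_mulVec]
          simp only [mstar, lprod, add_mulVec]
          abel
      _ = 1 := by rw [ih, hrow]

theorem mstar_row_sums_general {a k : ℕ}
    (Φ : ℕ → Matrix (Fin a) (Fin a) ℝ) (w : ℕ → Matrix (Fin a) (Fin k) ℝ)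
    (hΦnn : ∀ t, ∀ i j, 0 ≤ Φ t i j)
    (hrow : ∀ t, ∀ i, (∑ j, Φ t i j) + (∑ j, w t i j) = 1) :
    (∀ t, ∀ i, ∑ j, mstar Φ w t i j ≤ 1) ∧
    ((∀ i j, Tendsto (fun t => lprod Φ t i j) atTop (𝓝 0)) →
      ∀ i, Tendsto (fun t => ∑ j, mstar Φ w t i j) atTop (𝓝 1)) := by
  have hconserve (t : ℕ) (i : Fin a) :
      ∑ j, mstar Φ w t i j = 1 - ∑ j, lprod Φ (t + 1) i j := by
    have h := congrFun (mstar_mulVec_one_add_lprod_mulVec_one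
      (fun t => funext fun i => by simpa [mulVec_one_apply] using hrow t i) t) i
    rw [Pi.add_apply, mulVec_one_apply, mulVec_one_apply, Pi.one_apply] at h
    linarith
  refine ⟨fun t i => ?_, fun hlim i => ?_⟩
  · rw [hconserve]
    exact sub_le_self _ (Finset.sum_nonneg fun j _ => lprod_nonneg hΦnn _ i j)
  · have hrest : Tendsto (fun t => ∑ j, lprod Φ t i j) atTop (𝓝 0) := by
      simpa using tendsto_finsetSum Finset.univ fun j _ => hlim i j
    simpa [hconserve] using (hrest.comp (tendsto_add_atTop_nat 1)).const_sub 1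

/-- If each block matrix `[[Φ(t), w(t)], [0, I]]` is
row-stochastic (nonnegative blocks with `Λ_i[Φ(t)] + Λ_i[w(t)] = 1`), then
every `m*(t)` has all row sums at most 1, and if `Φ(t)⋯Φ(0) → 0`, then all
row sums of `m*(t)` converge to 1, i.e. the limit is row-stochastic. -/
theorem mstar_row_sums {a k : ℕ}
    (Φ : ℕ → Matrix (Fin a) (Fin a) ℝ) (w : ℕ → Matrix (Fin a) (Fin k) ℝ)
    (hΦnn : ∀ t, ∀ i j, 0 ≤ Φ t i j) (hwnn : ∀ t, ∀ i j, 0 ≤ w t i j)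
    (hrow : ∀ t, ∀ i, (∑ j, Φ t i j) + (∑ j, w t i j) = 1) :
    (∀ t, ∀ i, ∑ j, mstar Φ w t i j ≤ 1) ∧
    ((∀ i j, Tendsto (fun t => lprod Φ t i j) atTop (𝓝 0)) →
      ∀ i, Tendsto (fun t => ∑ j, mstar Φ w t i j) atTop (𝓝 1)) :=
  mstar_row_sums_general Φ w hΦnn hrow
end
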